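/- With the notation of the branch-switching automorphism above (σ of order 2 on A = R[[X,Y]]/(XY − π^e) with σ(X) = U₁Y, σ(Y) = U₂X, units U₁, U₂ ∈ A^×): the relations σ(U₁)·U₂ = 1 and U₁·U₂ = ζ^e hold in A, and consequently if ζ = −1 then e is even. -/

import Mathlib

/-!
Since `σ` swaps the branches, `X = σ²(X) = σ(U₁)U₂X` and `σ(XY) = U₁U₂XY`, while
`σ(XY) = σ(π^e) = ζ^e π^e`. Both identities can be cancelled because `XY = π^e` is a
non-zero-divisor of `A`, giving `σ(U₁)U₂ = 1` and `U₁U₂ = ζ^e`. If `ζ = -1` and `e` were odd,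
then `(σ(U₁) - U₁)U₂ = 1 - (-1) = 2`; the left side lies in the maximal ideal `(π, X, Y)` because
`σ` acts trivially on the residue field, whereas `2` is a unit.
-/

noncomputable section

abbrev annulusRel (R : Type*) [CommRing R] (c : R) : Ideal (MvPowerSeries (Fin 2) R) :=
  Ideal.span {(MvPowerSeries.X 0 : MvPowerSeries (Fin 2) R) * MvPowerSeries.X 1 -
    MvPowerSeries.C (σ := Fin 2) (R := R) c}

abbrev OpenAnnulusRing (R : Type*) [CommRing R] (c : R) : Type _ :=
  MvPowerSeries (Fin 2) R ⧸ annulusRel R c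

open scoped nonZeroDivisors

namespace OpenAnnulusRing

open MvPowerSeries

variable {R : Type*} [CommRing R]

theorem mk_X_mul_mk_X (c : R) :
    Ideal.Quotient.mk (annulusRel R c) (X 0) * Ideal.Quotient.mk (annulusRel R c) (X 1) =
      algebraMap R (OpenAnnulusRing R c) c := by
  rw [← map_mul, ← Ideal.Quotient.mk_algebraMap, Ideal.Quotient.eq]
  exact Ideal.mem_span_singleton_self _

theorem mem_annulusRel_of_mul_C_mem [IsDomain R] {c : R} (hc : c ≠ 0)
    {g : MvPowerSeries (Fin 2) R} (hg : g * C c ∈ annulusRel R c) : g ∈ annulusRel R c := by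
  obtain ⟨h, hgh⟩ := Ideal.mem_span_singleton'.mp hg
  set m : Fin 2 →₀ ℕ := Finsupp.single 0 1 + Finsupp.single 1 1
  have hXY : (X 0 : MvPowerSeries (Fin 2) R) * X 1 = monomial m 1 := by
    rw [X_def, X_def, monomial_mul_monomial, one_mul]
  -- comparing coefficients at `n + m` in `g c = h (XY - c)` shows that `c` divides `h`
  set h' : MvPowerSeries (Fin 2) R := fun n => coeff (n + m) g + coeff (n + m) h
  have hh' : h = C c * h' := by
    ext n
    have hn := congrArg (coeff (n + m)) hgh
    rw [mul_sub, hXY, map_sub, coeff_add_mul_monomial, coeff_mul_C, coeff_mul_C, mul_one] at hn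
    rw [coeff_C_mul]
    change _ = c * (coeff (n + m) g + coeff (n + m) h)
    linear_combination hn
  have hC : (C c : MvPowerSeries (Fin 2) R) ≠ 0 := (map_ne_zero_iff C C_injective).mpr hc
  refine Ideal.mem_span_singleton'.mpr ⟨h', mul_right_cancel₀ hC ?_⟩
  rw [hh'] at hgh
  linear_combination hgh

theorem algebraMap_mem_nonZeroDivisors [IsDomain R] {c : R} (hc : c ≠ 0) :
    algebraMap R (OpenAnnulusRing R c) c ∈ (OpenAnnulusRing R c)⁰ := by
  refine mem_nonZeroDivisors_iff_right.mpr fun a ha => ?_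
  obtain ⟨g, rfl⟩ := Ideal.Quotient.mk_surjective a
  rw [← Ideal.Quotient.mk_algebraMap, ← map_mul, Ideal.Quotient.eq_zero_iff_mem] at ha
  exact Ideal.Quotient.eq_zero_iff_mem.mpr (mem_annulusRel_of_mul_C_mem hc ha)

theorem span_algebraMap_mk_X_mk_X_ne_top {p c : R} (hp : ¬IsUnit p) (hpc : p ∣ c) :
    Ideal.span {algebraMap R (OpenAnnulusRing R c) p,
      Ideal.Quotient.mk (annulusRel R c) (X 0), Ideal.Quotient.mk (annulusRel R c) (X 1)} ≠ ⊤ := by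
  have := Ideal.Quotient.nontrivial_iff.mpr (Ideal.span_singleton_ne_top hp)
  let residue : OpenAnnulusRing R c →+* R ⧸ Ideal.span {p} :=
    Ideal.Quotient.lift _ ((Ideal.Quotient.mk _).comp constantCoeff) fun a ha => by
      obtain ⟨b, rfl⟩ := Ideal.mem_span_singleton'.mp ha
      have hc : Ideal.Quotient.mk (Ideal.span {p}) c = 0 :=
        Ideal.Quotient.eq_zero_iff_mem.mpr (Ideal.mem_span_singleton.mpr hpc)
      simp [hc]
  refine ne_top_of_le_ne_top (RingHom.ker_ne_top residue) (Ideal.span_le.mpr ?_)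
  rintro _ (rfl | rfl | rfl) <;> simp [residue, ← Ideal.Quotient.mk_algebraMap,
    MvPowerSeries.algebraMap_apply]

end OpenAnnulusRing

section BranchSwitching

variable {A : Type*} [CommRing A] {σ : A →+* A} {x y u₁ u₂ : A}

theorem map_mul_eq_one_of_swap (hσ : ∀ t, σ (σ t) = t) (hx : x ∈ A⁰)
    (hσx : σ x = u₁ * y) (hσy : σ y = u₂ * x) : σ u₁ * u₂ = 1 := by
  refine (mul_cancel_right_mem_nonZeroDivisors hx).mp ?_
  calc σ u₁ * u₂ * x = σ (σ x) := by rw [hσx, map_mul, hσy, mul_assoc]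
    _ = 1 * x := by rw [hσ, one_mul]

theorem mul_eq_of_swap {z : A} (hxy : x * y ∈ A⁰) (hσx : σ x = u₁ * y) (hσy : σ y = u₂ * x)
    (hz : σ (x * y) = z * (x * y)) : u₁ * u₂ = z := by
  refine (mul_cancel_right_mem_nonZeroDivisors hxy).mp ?_
  rw [← hz, map_mul, hσx, hσy]
  ring

end BranchSwitching

theorem branch_switching_unit_relations_general
    (R : Type*) [CommRing R] [IsDomain R]
    (π : R) (hπ : Irreducible π)
    -- the residue characteristic of `R` is different from 2
    (h2 : IsUnit (2 : R))
    (e : ℕ) (ζ : R)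
    (σ : OpenAnnulusRing R (π ^ e) →+* OpenAnnulusRing R (π ^ e))
    (hord : ∀ t, σ (σ t) = t)
    (hσπ : σ (algebraMap R (OpenAnnulusRing R (π ^ e)) π) =
      algebraMap R (OpenAnnulusRing R (π ^ e)) (ζ * π))
    -- when `ζ = −1`, `σ` induces the identity on the residue field
    (hres : ζ = -1 → ∀ t : OpenAnnulusRing R (π ^ e),
      σ t - t ∈ Ideal.span ({algebraMap R (OpenAnnulusRing R (π ^ e)) π,
        Ideal.Quotient.mk (annulusRel R (π ^ e)) (MvPowerSeries.X 0),
        Ideal.Quotient.mk (annulusRel R (π ^ e)) (MvPowerSeries.X 1)} :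
          Set (OpenAnnulusRing R (π ^ e))))
    (U₁ U₂ : (OpenAnnulusRing R (π ^ e))ˣ)
    (hσX : σ (Ideal.Quotient.mk (annulusRel R (π ^ e)) (MvPowerSeries.X 0)) =
      (U₁ : OpenAnnulusRing R (π ^ e)) *
        Ideal.Quotient.mk (annulusRel R (π ^ e)) (MvPowerSeries.X 1))
    (hσY : σ (Ideal.Quotient.mk (annulusRel R (π ^ e)) (MvPowerSeries.X 1)) =
      (U₂ : OpenAnnulusRing R (π ^ e)) *
        Ideal.Quotient.mk (annulusRel R (π ^ e)) (MvPowerSeries.X 0)) :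
    σ (U₁ : OpenAnnulusRing R (π ^ e)) * (U₂ : OpenAnnulusRing R (π ^ e)) = 1 ∧
    (U₁ : OpenAnnulusRing R (π ^ e)) * (U₂ : OpenAnnulusRing R (π ^ e)) =
      algebraMap R (OpenAnnulusRing R (π ^ e)) (ζ ^ e) ∧
    (ζ = -1 → Even e) := by
  have hXY := OpenAnnulusRing.algebraMap_mem_nonZeroDivisors (pow_ne_zero e hπ.ne_zero)
  rw [← OpenAnnulusRing.mk_X_mul_mk_X] at hXY
  have hinv := map_mul_eq_one_of_swap hord (mul_mem_nonZeroDivisors.mp hXY).1 hσX hσY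
  have hprod : (U₁ : OpenAnnulusRing R (π ^ e)) * U₂ = algebraMap R _ (ζ ^ e) :=
    mul_eq_of_swap hXY hσX hσY <| by
      rw [OpenAnnulusRing.mk_X_mul_mk_X, ← map_mul, ← mul_pow, map_pow (algebraMap R _) π,
        map_pow σ, hσπ, ← map_pow]
  refine ⟨hinv, hprod, fun hζ => Nat.not_odd_iff_even.mp fun he => ?_⟩
  have htwo := Ideal.mul_mem_right (U₂ : OpenAnnulusRing R (π ^ e)) _ (hres hζ U₁)
  rw [sub_mul, hinv, hprod, hζ, he.neg_one_pow, map_neg, map_one, sub_neg_eq_add,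
    one_add_one_eq_two] at htwo
  have hunit : IsUnit (2 : OpenAnnulusRing R (π ^ e)) := by
    simpa only [map_ofNat] using h2.map (algebraMap R (OpenAnnulusRing R (π ^ e)))
  exact OpenAnnulusRing.span_algebraMap_mk_X_mk_X_ne_top hπ.not_isUnit (dvd_pow_self π he.pos.ne')
    (Ideal.eq_top_of_isUnit_mem _ htwo hunit)

/-- for a branch-switching involution `σ` of `A = R[[X,Y]]/(XY − π^e)` with
`σ(X) = U₁Y`, `σ(Y) = U₂X` and `σ(π) = ζπ`, `ζ ∈ {±1}`, one has `σ(U₁)·U₂ = 1` and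
`U₁·U₂ = ζ^e`; consequently, if `ζ = −1` then `e` is even. -/
theorem branch_switching_unit_relations
    (R : Type*) [CommRing R] [IsDomain R] [IsDiscreteValuationRing R]
    (π : R) (hπ : Irreducible π) [IsAdicComplete (Ideal.span {π}) R]
    -- the residue characteristic of `R` is different from 2
    (h2 : IsUnit (2 : R))
    (e : ℕ) (he : 0 < e) (ζ : R) (hζ : ζ = 1 ∨ ζ = -1)
    (σ : OpenAnnulusRing R (π ^ e) →+* OpenAnnulusRing R (π ^ e))
    (hord : ∀ t, σ (σ t) = t)
    (hσπ : σ (algebraMap R (OpenAnnulusRing R (π ^ e)) π) =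
      algebraMap R (OpenAnnulusRing R (π ^ e)) (ζ * π))
    -- when `ζ = −1`, `σ` induces the identity on the residue field
    (hres : ζ = -1 → ∀ t : OpenAnnulusRing R (π ^ e),
      σ t - t ∈ Ideal.span ({algebraMap R (OpenAnnulusRing R (π ^ e)) π,
        Ideal.Quotient.mk (annulusRel R (π ^ e)) (MvPowerSeries.X 0),
        Ideal.Quotient.mk (annulusRel R (π ^ e)) (MvPowerSeries.X 1)} :
          Set (OpenAnnulusRing R (π ^ e))))
    (U₁ U₂ : (OpenAnnulusRing R (π ^ e))ˣ)
    (hσX : σ (Ideal.Quotient.mk (annulusRel R (π ^ e)) (MvPowerSeries.X 0)) =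
      (U₁ : OpenAnnulusRing R (π ^ e)) *
        Ideal.Quotient.mk (annulusRel R (π ^ e)) (MvPowerSeries.X 1))
    (hσY : σ (Ideal.Quotient.mk (annulusRel R (π ^ e)) (MvPowerSeries.X 1)) =
      (U₂ : OpenAnnulusRing R (π ^ e)) *
        Ideal.Quotient.mk (annulusRel R (π ^ e)) (MvPowerSeries.X 0)) :
    σ (U₁ : OpenAnnulusRing R (π ^ e)) * (U₂ : OpenAnnulusRing R (π ^ e)) = 1 ∧
    (U₁ : OpenAnnulusRing R (π ^ e)) * (U₂ : OpenAnnulusRing R (π ^ e)) =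
      algebraMap R (OpenAnnulusRing R (π ^ e)) (ζ ^ e) ∧
    (ζ = -1 → Even e) :=
  branch_switching_unit_relations_general R π hπ h2 e ζ σ hord hσπ hres U₁ U₂ hσX hσY
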